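/- Let G be a finite group with trivial center and p a prime. If the maximal p-index of elements of G equals p, i.e., max{|x^G|_p : x ∈ G} = p, then every Sylow p-subgroup of G is elementary abelian. -/
import Mathlib


/-- The index of an element `x` of a group `G`: the size of its conjugacy class,
`|x^G| = |G : C_G(x)|`. -/
noncomputable def classSize {G : Type*} [Group G] (x : G) : ℕ :=
  (Subgroup.centralizer {x}).index

/-- The `p`-index of `x`: the `p`-part of `|x^G|`. -/
noncomputable def pIndex (p : ℕ) {G : Type*} [Group G] (x : G) : ℕ :=
  p ^ ((classSize x).factorization p)

/-- `G` is `p`-index extremal (`G ∈ R(p)`): the set `N(G)_p` of `p`-indices of elements of `G`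
contains exactly one nontrivial element. -/
def IsPIndexExtremal (p : ℕ) (G : Type*) [Group G] : Prop :=
  ∃! a : ℕ, a ≠ 1 ∧ ∃ x : G, pIndex p x = a

/-- `x` is a `p`-element: its order is a power of `p`. -/
def IsPElement (p : ℕ) {G : Type*} [Group G] (x : G) : Prop :=
  ∃ k : ℕ, orderOf x = p ^ k

open Subgroup MulAction
open scoped Pointwise

section Aux

variable {G : Type*} [Group G]

private lemma cover_eq_top [Finite G] {H : Subgroup G}
    (h : ∀ y : G, ∃ g : G, g * y * g⁻¹ ∈ H) : H = ⊤ := by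
  classical
  cases nonempty_fintype G
  cases nonempty_fintype (G ⧸ H)
  by_contra hne
  have hidx : H.index ≠ 1 := fun h1 => hne (Subgroup.index_eq_one.mp h1)
  have hcard2 : 1 < Fintype.card (G ⧸ H) := by
    have h0 : Fintype.card (G ⧸ H) ≠ 0 := Fintype.card_ne_zero
    have h1 : Fintype.card (G ⧸ H) ≠ 1 := by
      rw [← Nat.card_eq_fintype_card]; exact hidx
    omega
  have hfix : ∀ y : G, Nonempty (fixedBy (G ⧸ H) y) := by
    intro y
    obtain ⟨g, hg⟩ := h y
    refine ⟨⟨((g⁻¹ : G) : G ⧸ H), ?_⟩⟩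
    show y • ((g⁻¹ : G) : G ⧸ H) = ((g⁻¹ : G) : G ⧸ H)
    have : ((y * g⁻¹ : G) : G ⧸ H) = ((g⁻¹ : G) : G ⧸ H) := by
      rw [QuotientGroup.eq]
      have := H.inv_mem hg
      simpa [mul_assoc] using this
    simpa using this
  have hΩ : Fintype.card (Quotient (orbitRel G (G ⧸ H))) = 1 := by
    rw [Fintype.card_eq_one_iff]
    refine ⟨⟦((1:G) : G ⧸ H)⟧, ?_⟩
    rintro ⟨q⟩
    apply Quotient.sound
    obtain ⟨g, hg⟩ := MulAction.exists_smul_eq G ((1:G) : G ⧸ H) q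
    exact mem_orbit_iff.mpr ⟨g, hg⟩
  have key := MulAction.sum_card_fixedBy_eq_card_orbits_mul_card_group G (G ⧸ H)
  rw [hΩ, one_mul] at key
  have hlt : ∑ _a : G, (1:ℕ) < ∑ a : G, Fintype.card (fixedBy (G ⧸ H) a) := by
    apply Finset.sum_lt_sum
    · intro i _
      haveI := hfix i
      exact Nat.one_le_iff_ne_zero.mpr Fintype.card_ne_zero
    · refine ⟨1, Finset.mem_univ _, ?_⟩
      have : Fintype.card (fixedBy (G ⧸ H) (1:G)) = Fintype.card (G ⧸ H) := by
        apply Fintype.card_congr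
        apply Equiv.subtypeUnivEquiv
        intro x
        simp [MulAction.mem_fixedBy]
      omega
  simp only [Finset.sum_const, Finset.card_univ, smul_eq_mul, mul_one] at hlt
  omega

private lemma pgroup_aux {p : ℕ} [hp : Fact p.Prime] {K : Type*} [Group K] [Finite K]
    (hK : IsPGroup p K) {M : Subgroup K} (hM : M.index ∣ p) :
    (∀ a b : K, a * b * a⁻¹ * b⁻¹ ∈ M) ∧ ∀ a : K, a ^ p ∈ M := by
  rcases (Nat.Prime.eq_one_or_self_of_dvd hp.out _ hM) with h1 | hpidx
  · have : M = ⊤ := Subgroup.index_eq_one.mp h1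
    subst this
    exact ⟨fun a b => trivial, fun a => trivial⟩
  · have hco : IsCoatom M := by
      constructor
      · intro htop
        rw [htop, Subgroup.index_top] at hpidx
        exact hp.out.one_lt.ne' hpidx.symm
      · intro H hMH
        have hdvd : H.index ∣ M.index := Subgroup.index_dvd_of_le hMH.le
        rw [hpidx] at hdvd
        rcases (Nat.Prime.eq_one_or_self_of_dvd hp.out _ hdvd) with h1 | h2
        · exact Subgroup.index_eq_one.mp h1
        · exfalso
          have hrel := Subgroup.relIndex_mul_index hMH.le
          rw [hpidx, h2] at hrel
          have hp0 : 0 < p := hp.out.pos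
          have : M.relIndex H = 1 := by nlinarith [hrel, hp0]
          exact hMH.ne (le_antisymm hMH.le (Subgroup.relIndex_eq_one.mp this))
    haveI hnil : Group.IsNilpotent K := hK.isNilpotent
    have hnorm : M.Normal :=
      Subgroup.NormalizerCondition.normal_of_coatom M
        (normalizerCondition_of_isNilpotent (G := K)) hco
    haveI := hnorm
    have hcard : Nat.card (K ⧸ M) = p := hpidx
    haveI : IsCyclic (K ⧸ M) := isCyclic_of_prime_card hcard
    have hcomm : ∀ x y : K ⧸ M, x * y = y * x := fun x y =>
      (IsCyclic.commGroup (α := K ⧸ M)).mul_comm x y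
    constructor
    · intro a b
      rw [← QuotientGroup.eq_one_iff]
      show (a : K ⧸ M) * (b : K ⧸ M) * (a : K ⧸ M)⁻¹ * (b : K ⧸ M)⁻¹ = 1
      rw [hcomm (a : K ⧸ M) b]
      group
    · intro a
      rw [← QuotientGroup.eq_one_iff]
      show ((a : K ⧸ M)) ^ p = 1
      rw [← hcard]
      exact pow_card_eq_one'

private lemma key_lemma [Finite G] {p : ℕ} [hp : Fact p.Prime]
    (hb : ∀ y : G, (Nat.factorization (Subgroup.centralizer {y}).index) p ≤ 1)
    (P : Sylow p G) (y : G) :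
    ∃ g : G, ∀ a b : G, a ∈ (P : Subgroup G) → b ∈ (P : Subgroup G) →
      g * (a ^ p) * g⁻¹ ∈ Subgroup.centralizer {y} ∧
      g * (a * b * a⁻¹ * b⁻¹) * g⁻¹ ∈ Subgroup.centralizer {y} := by
  classical
  set C := Subgroup.centralizer {y} with hC
  haveI : Finite (Sylow p G) :=
    Finite.of_injective (fun (Q : Sylow p G) => (Q : Subgroup G))
      (fun Q R h => Sylow.ext h)
  obtain ⟨Q⟩ : Nonempty (Sylow p ↥C) := inferInstance
  set Q' : Subgroup G := (Q : Subgroup ↥C).map C.subtype with hQ'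
  have hQ'p : IsPGroup p Q' := (Q.isPGroup').map C.subtype
  obtain ⟨P₂, hQP₂⟩ := hQ'p.exists_le_sylow
  obtain ⟨g, hg⟩ := MulAction.exists_smul_eq G P P₂
  -- cardinalities
  have hQ'card : Nat.card Q' = p ^ (Nat.card ↥C).factorization p := by
    rw [hQ']
    rw [Nat.card_congr (Subgroup.equivMapOfInjective (Q : Subgroup ↥C) C.subtype
      C.subtype_injective).toEquiv.symm]
    exact Q.card_eq_multiplicity
  set M : Subgroup ↥P₂ := Q'.subgroupOf P₂ with hM
  have hMcard : Nat.card M = Nat.card Q' :=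
    Nat.card_congr (Subgroup.subgroupOfEquivOfLe hQP₂).toEquiv
  have hP₂card : Nat.card ↥P₂ = p ^ (Nat.card G).factorization p :=
    P₂.card_eq_multiplicity
  have hGfact : (Nat.card G).factorization p
      = (C.index).factorization p + (Nat.card ↥C).factorization p := by
    have h1 : C.index * Nat.card ↥C = Nat.card G := Subgroup.index_mul_card C
    have h2 : C.index ≠ 0 := Subgroup.index_ne_zero_of_finite
    have h3 : Nat.card ↥C ≠ 0 := Nat.card_pos.ne'
    rw [← h1, Nat.factorization_mul h2 h3]
    simp
  have hMidx : M.index ∣ p := by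
    have h4 : M.index * Nat.card M = Nat.card ↥P₂ := Subgroup.index_mul_card M
    rw [hMcard, hQ'card, hP₂card, hGfact, pow_add] at h4
    have h5 : M.index = p ^ (C.index).factorization p :=
      Nat.eq_of_mul_eq_mul_right (pow_pos hp.out.pos _) h4
    rw [h5]
    calc p ^ (C.index).factorization p ∣ p ^ 1 := pow_dvd_pow p (hb y)
    _ = p := pow_one p
  have haux := pgroup_aux P₂.isPGroup' hMidx
  refine ⟨g, ?_⟩
  intro a b ha hb'
  have hmem : ∀ x : G, x ∈ (P : Subgroup G) → g * x * g⁻¹ ∈ (P₂ : Subgroup G) := by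
    intro x hx
    rw [← hg]
    have : MulAut.conj g • x ∈ MulAut.conj g • (P : Subgroup G) :=
      Subgroup.smul_mem_pointwise_smul x (MulAut.conj g) (P : Subgroup G) hx
    simpa [Sylow.coe_subgroup_smul] using this
  set u : ↥(P₂ : Subgroup G) := ⟨g * a * g⁻¹, hmem a ha⟩ with hu
  set v : ↥(P₂ : Subgroup G) := ⟨g * b * g⁻¹, hmem b hb'⟩ with hv
  have hMC : ∀ w : ↥(P₂ : Subgroup G), w ∈ M → (w : G) ∈ C := by
    intro w hw
    have : (w : G) ∈ Q' := hw
    exact Subgroup.map_subtype_le _ this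
  constructor
  · have := hMC (u ^ p) (haux.2 u)
    have hcoe : ((u ^ p : ↥(P₂ : Subgroup G)) : G) = g * a ^ p * g⁻¹ := by
      rw [SubgroupClass.coe_pow]
      show (g * a * g⁻¹) ^ p = g * a ^ p * g⁻¹
      rw [conj_pow]
    rwa [hcoe] at this
  · have := hMC (u * v * u⁻¹ * v⁻¹) (haux.1 u v)
    have hcoe : ((u * v * u⁻¹ * v⁻¹ : ↥(P₂ : Subgroup G)) : G)
        = g * (a * b * a⁻¹ * b⁻¹) * g⁻¹ := by
      push_cast
      show (g * a * g⁻¹) * (g * b * g⁻¹) * (g * a * g⁻¹)⁻¹ * (g * b * g⁻¹)⁻¹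
        = g * (a * b * a⁻¹ * b⁻¹) * g⁻¹
      group
    rwa [hcoe] at this

end Aux

theorem max_p_index_p_imp_sylow_elementary_abelian {G : Type*} [Group G] [Finite G] (p : ℕ)
    (hp : p.Prime) (hZ : Subgroup.center G = ⊥)
    (hmax : (⨆ x : G, pIndex p x) = p) (P : Sylow p G) :
    (∀ a b : (P : Subgroup G), a * b = b * a) ∧
      ∀ x ∈ (P : Subgroup G), x ≠ 1 → orderOf x = p := by
  haveI : Fact p.Prime := ⟨hp⟩
  have hb : ∀ y : G, (Nat.factorization (Subgroup.centralizer {y}).index) p ≤ 1 := by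
    intro y
    have h1 : pIndex p y ≤ p := by
      conv_rhs => rw [← hmax]
      exact le_ciSup (f := fun x : G => pIndex p x) (Set.Finite.bddAbove (Set.finite_range _)) y
    have h2 : p ^ ((classSize y).factorization p) ≤ p ^ 1 := by
      simpa [pIndex, pow_one] using h1
    exact (Nat.pow_le_pow_iff_right hp.one_lt).mp h2
  have hcenter : ∀ u : G,
      (∀ y : G, ∃ g : G, g * y * g⁻¹ ∈ Subgroup.centralizer {u}) → u = 1 := by
    intro u hu
    have htop : Subgroup.centralizer {u} = ⊤ := cover_eq_top hu
    have hmem : u ∈ Subgroup.center G := by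
      rw [Subgroup.mem_center_iff]
      intro g
      have hg : g ∈ Subgroup.centralizer {u} := htop ▸ Subgroup.mem_top g
      exact (Subgroup.mem_centralizer_iff.mp hg u (Set.mem_singleton u)).symm
    rw [hZ] at hmem
    exact Subgroup.mem_bot.mp hmem
  -- swap helper
  have hswap : ∀ (c y g : G), g * c * g⁻¹ ∈ Subgroup.centralizer {y} →
      g⁻¹ * y * g ∈ Subgroup.centralizer {c} := by
    intro c y g h
    have e : y * (g * c * g⁻¹) = (g * c * g⁻¹) * y :=
      Subgroup.mem_centralizer_iff.mp h y (Set.mem_singleton y)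
    rw [Subgroup.mem_centralizer_iff]
    simp only [Set.mem_singleton_iff, forall_eq]
    calc c * (g⁻¹ * y * g) = g⁻¹ * ((g * c * g⁻¹) * y) * g := by group
    _ = g⁻¹ * (y * (g * c * g⁻¹)) * g := by rw [← e]
    _ = (g⁻¹ * y * g) * c := by group
  have hpow : ∀ a : G, a ∈ (P : Subgroup G) → a ^ p = 1 := by
    intro a ha
    apply hcenter
    intro y
    obtain ⟨g, hg⟩ := key_lemma hb P y
    obtain ⟨h1, _⟩ := hg a a ha ha
    exact ⟨g⁻¹, by simpa using hswap _ y g h1⟩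
  have hcomm : ∀ a b : G, a ∈ (P : Subgroup G) → b ∈ (P : Subgroup G) →
      a * b * a⁻¹ * b⁻¹ = 1 := by
    intro a b ha hb'
    apply hcenter
    intro y
    obtain ⟨g, hg⟩ := key_lemma hb P y
    obtain ⟨_, h2⟩ := hg a b ha hb'
    exact ⟨g⁻¹, by simpa using hswap _ y g h2⟩
  constructor
  · intro a b
    have e := hcomm a b a.2 b.2
    have e' : ((a : G) * b) * ((b : G) * a)⁻¹ = 1 := by
      rw [mul_inv_rev]
      simpa [mul_assoc] using e
    have := mul_inv_eq_one.mp e'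
    exact Subtype.ext this
  · intro x hx hx1
    have e := hpow x hx
    have hdvd : orderOf x ∣ p := orderOf_dvd_of_pow_eq_one e
    rcases (Nat.Prime.eq_one_or_self_of_dvd hp _ hdvd) with h1 | h2
    · exact absurd (orderOf_eq_one_iff.mp h1) hx1
    · exact h2
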